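/- arXiv:1509.05947 — 3 statements merged into one kernel-verified Lean document; each statement's English description precedes it below -/
import Mathlib

section
/- Let ζ₁,...,ζ_N be complex numbers and define the 2×2 matrix product P_N(z) = ∏_{n=N}^{1} [[1, ζ_n z^{-n}], [-ζ̄_n z^n, 1]] (factors with higher index on the left, z a formal variable). Then the (2,2) entry of P_N is a Laurent polynomial in z with constant term 1, whose coefficient of z^m for m ≥ 1 equals the sum over all multi-indices 0 < j₁ < i₁ < j₂ < i₂ < ... < j_r < i_r ≤ N with ∑(i_s − j_s) = m of the products ζ_{j₁}(−ζ̄_{i₁})···ζ_{j_r}(−ζ̄_{i_r}). -/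
/-!
Expanding `M_N ⋯ M_1`, each entry of `P_N` is a sum over the sets `T ⊆ {1, …, N}` of factors at
which an off-diagonal entry is picked; entry `(a, b)` collects the `T` with `|T|` even iff
`a = b`. Reading the factors from the right, the off-diagonal picks alternate between the two
corners, so for the `(2, 2)` entry the increasing list `j₁ < i₁ < j₂ < ⋯` of `T` contributes
`ζ_{j₁}(-ζ̄_{i₁}) ⋯ z^{∑ (i_s - j_s)}`. The exponent is at least `|T| / 2`, so only `T = ∅`
contributes to the constant term.
-/

open scoped Matrix

/-- The elementary factor `[[1, ζ_n z^{-n}], [-ζ̄_n z^n, 1]]` over Laurent series. -/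
noncomputable def rsM (ζ : ℕ → ℂ) (n : ℕ) : Matrix (Fin 2) (Fin 2) (LaurentSeries ℂ) :=
  !![1, HahnSeries.single (-(n : ℤ)) (ζ n);
     HahnSeries.single (n : ℤ) (-(starRingEnd ℂ) (ζ n)), 1]

/-- The truncated product `P_N(z) = ∏_{n=N}^{1} [[1, ζ_n z^{-n}], [-ζ̄_n z^n, 1]]`,
with higher index on the left. -/
noncomputable def rsP (ζ : ℕ → ℂ) : ℕ → Matrix (Fin 2) (Fin 2) (LaurentSeries ℂ)
  | 0 => 1
  | n + 1 => rsM ζ (n + 1) * rsP ζ n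

/-- The product attached to an increasing list of indices, where the positions `p`
with `p % 2 = 0 ↔ firstIsI` play the role of the `i`'s (factor `-ζ̄`), and the other
positions play the role of the `j`'s (factor `ζ`). -/
noncomputable def rsTermProd (ζ : ℕ → ℂ) (firstIsI : Bool) (L : List ℕ) : ℂ :=
  ∏ p ∈ Finset.range L.length,
    if (p % 2 = 0) ↔ firstIsI = true then -(starRingEnd ℂ) (ζ (L.getD p 0))
    else ζ (L.getD p 0)

/-- The signed sum `∑ i_* − ∑ j_*` attached to an increasing list of indices. -/
def rsTermSum (firstIsI : Bool) (L : List ℕ) : ℤ :=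
  ∑ p ∈ Finset.range L.length,
    if (p % 2 = 0) ↔ firstIsI = true then (L.getD p 0 : ℤ) else -(L.getD p 0 : ℤ)


open Finset

lemma Finset.sort_insert_of_forall_lt {α : Type*} [LinearOrder α] {s : Finset α} {a : α}
    (h : ∀ b ∈ s, b < a) : (insert a s).sort (· ≤ ·) = s.sort (· ≤ ·) ++ [a] := by
  have ha : a ∉ s := fun ha => lt_irrefl a (h a ha)
  refine List.Perm.eq_of_pairwise' (pairwise_sort _ _) ?_ ?_
  · refine List.pairwise_append.mpr ⟨pairwise_sort _ _, List.pairwise_singleton _ a, ?_⟩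
    simp only [mem_sort, List.mem_singleton]
    rintro b hb _ rfl
    exact (h b hb).le
  · rw [← Multiset.coe_eq_coe, sort_eq, insert_val_of_notMem ha, ← Multiset.coe_add, sort_eq,
      Multiset.coe_singleton, add_comm, Multiset.singleton_add]

lemma Finset.sum_powerset_insert_filter_card {α M : Type*} [DecidableEq α] [AddCommMonoid M]
    {s : Finset α} {a : α} (ha : a ∉ s) (p : ℕ → Prop) [DecidablePred p] (g : Finset α → M) :
    ∑ T ∈ (insert a s).powerset with p T.card, g T =
      ∑ T ∈ s.powerset with p T.card, g T +
        ∑ T ∈ s.powerset with p (T.card + 1), g (insert a T) := by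
  rw [sum_filter, sum_powerset_insert ha, sum_filter, sum_filter]
  congr 1
  refine sum_congr rfl fun T hT => ?_
  rw [card_insert_of_notMem fun h => ha (mem_powerset.mp hT h)]

section

variable (ζ : ℕ → ℂ)

noncomputable def rsMonomial (firstIsI : Bool) (L : List ℕ) : LaurentSeries ℂ :=
  HahnSeries.single (rsTermSum firstIsI L) (rsTermProd ζ firstIsI L)

lemma rsTermSum_append_singleton (f : Bool) (L : List ℕ) (x : ℕ) :
    rsTermSum f (L ++ [x]) =
      rsTermSum f L + if L.length % 2 = 0 ↔ f = true then (x : ℤ) else -(x : ℤ) := by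
  rw [rsTermSum, rsTermSum, List.length_append, List.length_singleton, sum_range_succ,
    List.getD_append_right _ _ _ _ le_rfl, Nat.sub_self]
  congr 1
  exact sum_congr rfl fun p hp => by rw [List.getD_append _ _ _ _ (mem_range.mp hp)]

lemma rsTermProd_append_singleton (f : Bool) (L : List ℕ) (x : ℕ) :
    rsTermProd ζ f (L ++ [x]) =
      rsTermProd ζ f L * if L.length % 2 = 0 ↔ f = true then -(starRingEnd ℂ) (ζ x) else ζ x := by
  rw [rsTermProd, rsTermProd, List.length_append, List.length_singleton, prod_range_succ,
    List.getD_append_right _ _ _ _ le_rfl, Nat.sub_self]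
  congr 1
  exact prod_congr rfl fun p hp => by rw [List.getD_append _ _ _ _ (mem_range.mp hp)]

lemma rsMonomial_append_singleton (f : Bool) (L : List ℕ) (x : ℕ) :
    rsMonomial ζ f (L ++ [x]) =
      (if L.length % 2 = 0 ↔ f = true then rsM ζ x 1 0 else rsM ζ x 0 1) * rsMonomial ζ f L := by
  rw [rsMonomial, rsMonomial, rsTermSum_append_singleton, rsTermProd_append_singleton]
  split_ifs <;> simp [rsM, HahnSeries.single_mul_single, mul_comm, -HahnSeries.single_neg]

lemma rsP_succ_apply (N : ℕ) (a b : Fin 2) :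
    rsP ζ (N + 1) a b = rsP ζ N a b + rsM ζ (N + 1) a (a + 1) * rsP ζ N (a + 1) b := by
  rw [rsP, Matrix.mul_apply, Fin.sum_univ_two]
  fin_cases a <;> simp [rsM, add_comm]

lemma rsM_off_diagonal_eq (x n : ℕ) (a b : Fin 2) (h : n % 2 = 0 ↔ a + 1 = b) :
    (if n % 2 = 0 ↔ decide (b = 0) = true then rsM ζ x 1 0 else rsM ζ x 0 1) =
      rsM ζ x a (a + 1) := by
  fin_cases a <;> fin_cases b <;> simp_all

/-- Reading from the right, the first off-diagonal pick (at the smallest element of `T`) is the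
lower-left entry `-ζ̄ z^n`, i.e. an `i`, exactly when `b = 0`. -/
theorem rsP_apply (N : ℕ) (a b : Fin 2) :
    rsP ζ N a b = ∑ T ∈ (Icc 1 N).powerset with (T.card % 2 = 0 ↔ a = b),
      rsMonomial ζ (decide (b = 0)) (T.sort (· ≤ ·)) := by
  induction N generalizing a with
  | zero =>
    by_cases hab : a = b <;>
      simp [rsP, Matrix.one_apply, hab, filter_singleton, rsMonomial, rsTermSum, rsTermProd]
  | succ N ih =>
    have parity (T : Finset ℕ) : ((T.card + 1) % 2 = 0 ↔ a = b) ↔ (T.card % 2 = 0 ↔ a + 1 = b) := by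
      fin_cases a <;> fin_cases b <;> grind
    rw [rsP_succ_apply, ih, ih, ← insert_Icc_right_eq_Icc_add_one (by omega),
      sum_powerset_insert_filter_card (by simp) (fun n => n % 2 = 0 ↔ a = b), mul_sum,
      filter_congr fun T _ => parity T]
    congr 1
    refine sum_congr rfl fun T hT => ?_
    have hlt : ∀ y ∈ T, y < N + 1 := fun y hy =>
      Nat.lt_succ_of_le (mem_Icc.mp (mem_powerset.mp (mem_filter.mp hT).1 hy)).2
    rw [sort_insert_of_forall_lt hlt, rsMonomial_append_singleton, length_sort,
      rsM_off_diagonal_eq ζ _ _ a b (mem_filter.mp hT).2]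

lemma coeff_rsP_one_one (N : ℕ) (k : ℤ) :
    (rsP ζ N 1 1).coeff k = ∑ T ∈ (Icc 1 N).powerset with
        (T.card % 2 = 0 ∧ rsTermSum false (T.sort (· ≤ ·)) = k),
      rsTermProd ζ false (T.sort (· ≤ ·)) := by
  rw [rsP_apply, HahnSeries.coeff_sum, ← filter_filter]
  conv_rhs => rw [sum_filter]
  refine sum_congr (by simp) fun T _ => ?_
  simp [rsMonomial, HahnSeries.coeff_single, eq_comm]

end

lemma rsTermSum_false_cons_cons (a b : ℕ) (L : List ℕ) :
    rsTermSum false (a :: b :: L) = (b - a : ℤ) + rsTermSum false L := by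
  rw [rsTermSum, rsTermSum, List.length_cons, List.length_cons, sum_range_succ', sum_range_succ']
  simp [Nat.succ_mod_two_eq_zero_iff]
  ring

lemma length_le_two_mul_rsTermSum_false :
    ∀ L : List ℕ, L.Pairwise (· < ·) → L.length % 2 = 0 → (L.length : ℤ) ≤ 2 * rsTermSum false L
  | [], _, _ => by simp [rsTermSum]
  | [_], _, h => by simp at h
  | a :: b :: L, hL, h => by
    have hab : a < b := List.rel_of_pairwise_cons hL (by simp)
    have ih := length_le_two_mul_rsTermSum_false L hL.of_cons.of_cons (by simp at h; omega)
    rw [rsTermSum_false_cons_cons]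
    push_cast [List.length_cons]
    omega

lemma filter_rsTermSum_false_eq_zero (N : ℕ) :
    (Icc 1 N).powerset.filter
        (fun T => T.card % 2 = 0 ∧ rsTermSum false (T.sort (· ≤ ·)) = 0) = {∅} := by
  ext T
  simp only [mem_filter, mem_powerset, mem_singleton]
  constructor
  · rintro ⟨-, hcard, hsum⟩
    have := length_le_two_mul_rsTermSum_false _ (sortedLT_sort T).pairwise
      (by rwa [length_sort])
    rw [hsum, length_sort] at this
    exact card_eq_zero.mp (by omega)
  · rintro rfl
    simp [rsTermSum]

/-- The `(2,2)` entry of the truncated product `P_N` is a Laurent polynomial with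
constant term `1`, whose coefficient of `z^m` for `m ≥ 1` is the sum, over all
multi-indices `0 < j₁ < i₁ < ⋯ < j_r < i_r ≤ N` (i.e. subsets of `{1,…,N}` of even
cardinality, listed increasingly, with the `j`'s in the even positions) satisfying
`∑ (i_s − j_s) = m`, of `ζ_{j₁}(−ζ̄_{i₁}) ⋯ ζ_{j_r}(−ζ̄_{i_r})`. -/
theorem coeff_entry22_of_truncated_product (N : ℕ) (ζ : ℕ → ℂ) :
    ((rsP ζ N) 1 1).coeff 0 = 1 ∧
    ∀ m : ℕ, 1 ≤ m →
      ((rsP ζ N) 1 1).coeff (m : ℤ) =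
        ∑ T ∈ (Finset.Icc 1 N).powerset.filter
            (fun T => T.card % 2 = 0 ∧ rsTermSum false (T.sort (· ≤ ·)) = (m : ℤ)),
          rsTermProd ζ false (T.sort (· ≤ ·)) := by
  refine ⟨?_, fun m _ => coeff_rsP_one_one ζ N m⟩
  rw [coeff_rsP_one_one, filter_rsTermSum_false_eq_zero, sum_singleton]
  simp [rsTermProd]
end

section
/- In the setting of the main theorem, the coefficient ξ_n of z^n in γ₂/δ₂ satisfies ξ_n = (−ζ̄_n)·∏_{s=1}^{n−1}(1 + |ζ_s|²) + Q_n, where Q_n is a polynomial in ζ_s, ζ̄_s for s < n. In particular ξ₁ = −ζ̄₁ and ξ₂ = −ζ̄₂(1+|ζ₁|²). -/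
open scoped Matrix

/-- The coefficient `ξ_n` of `z^n` in `γ₂/δ₂` (quotient of the `(2,1)` and `(2,2)`
entries of the truncated product at level `N`). -/
noncomputable def rsXi (N : ℕ) (ζ : ℕ → ℂ) (n : ℕ) : ℂ :=
  ((rsP ζ N) 1 0 * ((rsP ζ N) 1 1)⁻¹).coeff (n : ℤ)

/-!
Put `T_m = diag(z^{m+1}, 1) P_m`. Conjugating each factor of `P_m` by diagonal powers of `z`
turns it into the polynomial matrix `[[z, ζ_s z], [-ζ̄_s, 1]]`, so `T_m` is a matrix of power
series whose coefficients are polynomials in `ζ_s, ζ̄_s` (`s ≤ m`), with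
`det T_m = z^{m+1} ∏_{s ≤ m} (1 + |ζ_s|²)`. Its bottom row is `(γ_m, δ_m)`, and `δ_m(0) = 1`.
The determinant gives
`γ_{m+1}/δ_{m+1} - γ_m/δ_m = -ζ̄_{m+1} z^{m+1} ∏_{s ≤ m} (1 + |ζ_s|²) / (δ_m δ_{m+1})`,
so the coefficients of `γ_m/δ_m` below `z^{m+1}` are stable and that of `z^{m+1}` moves by
`-ζ̄_{m+1} ∏_{s ≤ m} (1 + |ζ_s|²)`. Hence
`ξ_n = [z^n](γ_{n-1}/δ_{n-1}) - ζ̄_n ∏_{s < n} (1 + |ζ_s|²)`, and running the same computation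
over the polynomial ring in symbols `ζ_s, ζ̄_s` shows that the first term is a polynomial in them.
-/

namespace PowerSeries

theorem map_invOfUnit_one {S T : Type*} [CommRing S] [CommRing T] (φ : S →+* T)
    {f : S⟦X⟧} (hf : constantCoeff f = 1) :
    map φ (invOfUnit f 1) = invOfUnit (map φ f) 1 := by
  have hφf : constantCoeff (map φ f) = ↑(1 : Tˣ) := by
    simp [← coeff_zero_eq_constantCoeff_apply, hf]
  refine left_inv_eq_right_inv ?_ (mul_invOfUnit _ _ hφf)
  rw [← map_mul, invOfUnit_mul f 1 (by simpa using hf), map_one]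

end PowerSeries

section ShiftedProduct

open PowerSeries

variable {S : Type*} [CommRing S] (ζ η : ℕ → S)

noncomputable def shiftedFactor (m : ℕ) : Matrix (Fin 2) (Fin 2) S⟦X⟧ :=
  !![X, C (ζ m) * X; -C (η m), 1]

/- The matrix `T_m` above, with `η` in place of `ζ̄`. -/
noncomputable def shiftedProd : ℕ → Matrix (Fin 2) (Fin 2) S⟦X⟧
  | 0 => !![X, 0; 0, 1]
  | m + 1 => shiftedFactor ζ η (m + 1) * shiftedProd m

theorem det_shiftedProd (m : ℕ) :
    (shiftedProd ζ η m).det =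
      C (∏ s ∈ Finset.Ico 1 (m + 1), (1 + ζ s * η s)) * X ^ (m + 1) := by
  induction m with
  | zero => simp [shiftedProd]
  | succ m ih =>
    rw [shiftedProd, Matrix.det_mul, ih, shiftedFactor, Matrix.det_fin_two_of,
      Finset.prod_Ico_succ_top (show 1 ≤ m + 1 by omega), map_mul, map_add, map_one, map_mul]
    ring

theorem shiftedProd_succ_one (m : ℕ) (j : Fin 2) :
    shiftedProd ζ η (m + 1) 1 j =
      shiftedProd ζ η m 1 j - C (η (m + 1)) * shiftedProd ζ η m 0 j := by
  simp [shiftedProd, shiftedFactor, Matrix.mul_apply, Fin.sum_univ_two]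
  ring

theorem constantCoeff_shiftedProd_zero_one (m : ℕ) :
    constantCoeff (shiftedProd ζ η m 0 1) = 0 := by
  cases m <;> simp [shiftedProd, shiftedFactor, Matrix.mul_apply, Fin.sum_univ_two]

theorem constantCoeff_shiftedProd_one_one (m : ℕ) :
    constantCoeff (shiftedProd ζ η m 1 1) = 1 := by
  induction m with
  | zero => simp [shiftedProd]
  | succ m ih => simp [shiftedProd_succ_one, ih, constantCoeff_shiftedProd_zero_one]

theorem shiftedProd_congr {ζ η ζ' η' : ℕ → S} {m : ℕ} (hζ : ∀ s ≤ m, ζ s = ζ' s)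
    (hη : ∀ s ≤ m, η s = η' s) :
    shiftedProd ζ η m = shiftedProd ζ' η' m := by
  induction m with
  | zero => rfl
  | succ m ih =>
    rw [shiftedProd, shiftedProd, shiftedFactor, shiftedFactor, hζ _ le_rfl, hη _ le_rfl,
      ih (fun s hs => hζ s (by omega)) (fun s hs => hη s (by omega))]

theorem map_shiftedProd {T : Type*} [CommRing T] (φ : S →+* T) (m : ℕ) :
    (shiftedProd ζ η m).map (PowerSeries.map φ) = shiftedProd (φ ∘ ζ) (φ ∘ η) m := by
  induction m with
  | zero => ext i j; fin_cases i <;> fin_cases j <;> simp [shiftedProd]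
  | succ m ih =>
    rw [shiftedProd, shiftedProd, ← ih, Matrix.map_mul]
    congr 1
    ext i j; fin_cases i <;> fin_cases j <;> simp [shiftedFactor]

noncomputable def shiftedRatio (m : ℕ) : S⟦X⟧ :=
  shiftedProd ζ η m 1 0 * invOfUnit (shiftedProd ζ η m 1 1) 1

theorem shiftedProd_one_one_mul_invOfUnit (m : ℕ) :
    shiftedProd ζ η m 1 1 * invOfUnit (shiftedProd ζ η m 1 1) 1 = 1 :=
  mul_invOfUnit _ _ (by simp [constantCoeff_shiftedProd_one_one])

theorem shiftedRatio_succ (m : ℕ) :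
    shiftedRatio ζ η (m + 1) = shiftedRatio ζ η m -
      X ^ (m + 1) * (C (η (m + 1) * ∏ s ∈ Finset.Ico 1 (m + 1), (1 + ζ s * η s)) *
        invOfUnit (shiftedProd ζ η m 1 1) 1 * invOfUnit (shiftedProd ζ η (m + 1) 1 1) 1) := by
  have hdet := det_shiftedProd ζ η m
  rw [Matrix.det_fin_two] at hdet
  have hb := shiftedProd_one_one_mul_invOfUnit ζ η m
  have hb' := shiftedProd_one_one_mul_invOfUnit ζ η (m + 1)
  unfold shiftedRatio
  set b := invOfUnit (shiftedProd ζ η m 1 1) 1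
  set b' := invOfUnit (shiftedProd ζ η (m + 1) 1 1) 1
  rw [shiftedProd_succ_one] at hb' ⊢
  rw [map_mul]
  -- for the bottom rows `(A_m, B_m)`: `A_{m+1} B_m - A_m B_{m+1} = -η_{m+1} det T_m`
  linear_combination
    (-(shiftedProd ζ η m 1 0 - C (η (m + 1)) * shiftedProd ζ η m 0 0) * b') * hb
      + shiftedProd ζ η m 1 0 * b * hb' - C (η (m + 1)) * b * b' * hdet

theorem coeff_shiftedRatio_succ_of_le {k m : ℕ} (h : k ≤ m) :
    coeff k (shiftedRatio ζ η (m + 1)) = coeff k (shiftedRatio ζ η m) := by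
  rw [shiftedRatio_succ, map_sub, coeff_X_pow_mul', if_neg (by omega), sub_zero]

theorem coeff_shiftedRatio_succ_self (m : ℕ) :
    coeff (m + 1) (shiftedRatio ζ η (m + 1)) =
      coeff (m + 1) (shiftedRatio ζ η m) -
        η (m + 1) * ∏ s ∈ Finset.Ico 1 (m + 1), (1 + ζ s * η s) := by
  rw [shiftedRatio_succ, map_sub, coeff_X_pow_mul', if_pos le_rfl, Nat.sub_self,
    coeff_zero_eq_constantCoeff_apply]
  simp

theorem coeff_shiftedRatio_of_le {n N : ℕ} (h : n ≤ N) :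
    coeff n (shiftedRatio ζ η N) = coeff n (shiftedRatio ζ η n) := by
  induction N, h using Nat.le_induction with
  | base => rfl
  | succ N hN ih => rw [coeff_shiftedRatio_succ_of_le ζ η hN, ih]

theorem map_shiftedRatio {T : Type*} [CommRing T] (φ : S →+* T) (m : ℕ) :
    PowerSeries.map φ (shiftedRatio ζ η m) = shiftedRatio (φ ∘ ζ) (φ ∘ η) m := by
  rw [shiftedRatio, shiftedRatio, map_mul,
    map_invOfUnit_one φ (constantCoeff_shiftedProd_one_one ζ η m),
    ← map_shiftedProd ζ η φ m]
  rfl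

theorem shiftedRatio_zero : shiftedRatio ζ η 0 = 0 := by
  simp [shiftedRatio, shiftedProd]

theorem shiftedRatio_one : shiftedRatio ζ η 1 = -(C (η 1) * X) := by
  have hinv : invOfUnit (1 : S⟦X⟧) 1 = 1 := by
    simpa using mul_invOfUnit (1 : S⟦X⟧) 1 (by simp)
  simp [shiftedRatio, shiftedProd, shiftedFactor, hinv]

theorem exists_mvPolynomial_eval_eq_coeff_shiftedRatio {n m : ℕ} (hm : m < n) (k : ℕ) :
    ∃ Q : MvPolynomial (Fin n × Bool) S, ∀ ζ η : ℕ → S,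
      coeff k (shiftedRatio ζ η m) =
        MvPolynomial.eval (fun v : Fin n × Bool => if v.2 then ζ v.1 else η v.1) Q := by
  let var (b : Bool) (s : ℕ) : MvPolynomial (Fin n × Bool) S :=
    if h : s < n then MvPolynomial.X (⟨s, h⟩, b) else 0
  refine ⟨coeff k (shiftedRatio (var true) (var false) m), fun ζ η => ?_⟩
  have hvar (b : Bool) (s : ℕ) (hs : s ≤ m) :
      (MvPolynomial.eval (fun v : Fin n × Bool => if v.2 then ζ v.1 else η v.1) ∘ var b) s =
        if b then ζ s else η s := by
    simp [var, show s < n by omega]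
  rw [← coeff_map, map_shiftedRatio, shiftedRatio, shiftedRatio,
    shiftedProd_congr (fun s hs => hvar true s hs) (fun s hs => hvar false s hs)]
  rfl

end ShiftedProduct

theorem shiftedFactor_mul_single_eq (ζ : ℕ → ℂ) (m : ℕ) :
    (shiftedFactor ζ (fun s => starRingEnd ℂ (ζ s)) (m + 1)).map
        (HahnSeries.ofPowerSeries ℤ ℂ) *
        !![HahnSeries.single ((m : ℤ) + 1) 1, 0; 0, 1] =
      !![HahnSeries.single ((m : ℤ) + 1 + 1) 1, 0; 0, 1] * rsM ζ (m + 1) := by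
  ext i j : 2
  fin_cases i <;> fin_cases j <;>
    simp [shiftedFactor, rsM, Matrix.mul_apply, Fin.sum_univ_two, HahnSeries.single_mul_single,
      HahnSeries.C_apply]
  rw [add_comm]

theorem map_ofPowerSeries_shiftedProd (ζ : ℕ → ℂ) (m : ℕ) :
    (shiftedProd ζ (fun s => starRingEnd ℂ (ζ s)) m).map (HahnSeries.ofPowerSeries ℤ ℂ) =
      !![HahnSeries.single ((m : ℤ) + 1) 1, 0; 0, 1] * rsP ζ m := by
  induction m with
  | zero =>
    ext i j : 2
    fin_cases i <;> fin_cases j <;> simp [shiftedProd, rsP]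
  | succ m ih =>
    rw [shiftedProd, Matrix.map_mul, ih, ← mul_assoc, shiftedFactor_mul_single_eq, mul_assoc,
      rsP]
    push_cast
    rfl

theorem rsXi_eq_coeff_shiftedRatio (ζ : ℕ → ℂ) (N n : ℕ) :
    rsXi N ζ n = PowerSeries.coeff n (shiftedRatio ζ (fun s => starRingEnd ℂ (ζ s)) N) := by
  set T := shiftedProd ζ (fun s => starRingEnd ℂ (ζ s)) N
  have hrow (j : Fin 2) : HahnSeries.ofPowerSeries ℤ ℂ (T 1 j) = rsP ζ N 1 j := by
    simpa [Matrix.mul_apply, Fin.sum_univ_two] using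
      congrFun₂ (map_ofPowerSeries_shiftedProd ζ N) 1 j
  have hinv : (rsP ζ N 1 1)⁻¹ =
      HahnSeries.ofPowerSeries ℤ ℂ (PowerSeries.invOfUnit (T 1 1) 1) := by
    rw [← hrow]
    refine inv_eq_of_mul_eq_one_right ?_
    rw [← map_mul, shiftedProd_one_one_mul_invOfUnit, map_one]
  rw [rsXi, ← hrow, hinv, ← map_mul, HahnSeries.ofPowerSeries_apply_coeff]
  rfl

theorem rsXi_succ (ζ : ℕ → ℂ) {N k : ℕ} (h : k + 1 ≤ N) :
    rsXi N ζ (k + 1) =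
      PowerSeries.coeff (k + 1) (shiftedRatio ζ (fun s => starRingEnd ℂ (ζ s)) k) -
        starRingEnd ℂ (ζ (k + 1)) *
          ∏ s ∈ Finset.Ico 1 (k + 1), ((1 + Complex.normSq (ζ s) : ℝ) : ℂ) := by
  rw [rsXi_eq_coeff_shiftedRatio, coeff_shiftedRatio_of_le _ _ h, coeff_shiftedRatio_succ_self]
  push_cast
  simp only [Complex.mul_conj]

/-- Triangularity: `ξ_n = (−ζ̄_n)·∏_{s=1}^{n−1}(1+|ζ_s|²) + Q_n` where `Q_n` is a
polynomial in `ζ_s, ζ̄_s` for `s < n` (the variable `(s, true)` evaluates to `ζ_s`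
and `(s, false)` to `ζ̄_s`); in particular `ξ₁ = −ζ̄₁` and
`ξ₂ = −ζ̄₂(1+|ζ₁|²)`. -/
theorem xi_triangular (N n : ℕ) (hn : 1 ≤ n) (hnN : n ≤ N) :
    (∃ Q : MvPolynomial (Fin n × Bool) ℂ,
      ∀ ζ : ℕ → ℂ,
        rsXi N ζ n =
          (-(starRingEnd ℂ) (ζ n)) *
              (∏ s ∈ Finset.Ico 1 n, ((1 + Complex.normSq (ζ s) : ℝ) : ℂ)) +
            MvPolynomial.eval
              (fun v : Fin n × Bool =>
                if v.2 then ζ (v.1 : ℕ) else (starRingEnd ℂ) (ζ (v.1 : ℕ))) Q) ∧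
    (∀ ζ : ℕ → ℂ, rsXi N ζ 1 = -(starRingEnd ℂ) (ζ 1)) ∧
    (∀ ζ : ℕ → ℂ, 2 ≤ N →
      rsXi N ζ 2 =
        -(starRingEnd ℂ) (ζ 2) * ((1 + Complex.normSq (ζ 1) : ℝ) : ℂ)) := by
  obtain ⟨k, rfl⟩ : ∃ k, n = k + 1 := ⟨n - 1, by omega⟩
  refine ⟨?_, fun ζ => ?_, fun ζ hN => ?_⟩
  · obtain ⟨Q, hQ⟩ :=
      exists_mvPolynomial_eval_eq_coeff_shiftedRatio (S := ℂ) (lt_add_one k) (k + 1)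
    refine ⟨Q, fun ζ => ?_⟩
    rw [rsXi_succ ζ hnN, hQ]
    ring
  · rw [rsXi_succ ζ (k := 0) (by omega), shiftedRatio_zero]
    simp
  · rw [rsXi_succ ζ (k := 1) hN, shiftedRatio_one]
    simp
end

section
/- The map (ζ₁,...,ζ_N) ↦ (ξ₁,...,ξ_N), where ξ_n is the n-th coefficient of γ₂/δ₂ from the truncated product at level N, is a bijection from ℂ^N to ℂ^N. -/
/-!
Write `P_m = [[α_m, β_m], [γ_m, δ_m]]` for the truncated product and `f_m = γ_m / δ_m`.
`δ_m = 1 + O(z)` and `det P_m = ∏_{s ≤ m} (1 + |ζ_s|²)`, a positive constant, so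
`P_{m+1} = M_{m+1} P_m` gives
`f_{m+1} - f_m = -ζ̄_{m+1} det P_m · z^{m+1} / (δ_{m+1} δ_m)`.
Hence the coefficients of `f_m` up to `z^m` do not change from level `m` on, and
`ξ_{m+1} = Q(ζ_1, …, ζ_m) - ζ̄_{m+1} det P_m`. The map `ζ ↦ ξ` is therefore triangular with
bijective diagonal entries `w ↦ Q - w̄ · det P_m`, hence bijective.
-/

open scoped Matrix

/-- Extension of a tuple `(ζ₁, …, ζ_N)` to a function `ℕ → ℂ` (zero elsewhere). -/
noncomputable def rsExt (N : ℕ) (ζ : Fin N → ℂ) : ℕ → ℂ := fun k =>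
  if h : 1 ≤ k ∧ k ≤ N then ζ ⟨k - 1, by omega⟩ else 0

open Function HahnSeries

theorem Function.bijective_of_triangular {α β : Type*} [Nonempty α] {N : ℕ}
    {F : (Fin N → α) → Fin N → β}
    (hF : ∀ x y n, (∀ m ≤ n, x m = y m) → F x n = F y n)
    (hdiag : ∀ x n, Bijective fun w => F (update x n w) n) :
    Bijective F := by
  constructor
  · intro x y hxy
    funext n
    induction n using WellFoundedLT.induction with
    | _ n ih =>
      apply (hdiag x n).1
      simp only [update_eq_self]
      rw [congrFun hxy n]
      refine hF _ _ n fun m hm => ?_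
      rcases hm.lt_or_eq with hlt | rfl
      · rw [update_of_ne hlt.ne, ih m hlt]
      · rw [update_self]
  · intro ξ
    suffices ∀ k ≤ N, ∃ x, ∀ m : Fin N, (m : ℕ) < k → F x m = ξ m by
      obtain ⟨x, hx⟩ := this N le_rfl
      exact ⟨x, funext fun m => hx m m.isLt⟩
    intro k
    induction k with
    | zero => exact fun _ => ⟨Classical.arbitrary _, fun m hm => (Nat.not_lt_zero _ hm).elim⟩
    | succ k ih =>
      intro hk
      obtain ⟨x, hx⟩ := ih (by omega)
      let n : Fin N := ⟨k, hk⟩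
      obtain ⟨w, hw⟩ := (hdiag x n).2 (ξ n)
      refine ⟨update x n w, fun m hm => ?_⟩
      rcases (Nat.lt_succ_iff.1 hm).lt_or_eq with hlt | heq
      · rw [← hx m hlt]
        exact hF _ _ m fun j hj => update_of_ne (Fin.ne_of_lt (lt_of_le_of_lt hj hlt)) _ _
      · rwa [show m = n from Fin.ext heq]

lemma Complex.bijective_sub_conj_mul (a : ℂ) {d : ℂ} (hd : d ≠ 0) :
    Bijective fun w => a - (starRingEnd ℂ) w * d :=
  ((Equiv.mulRight₀ d hd).trans (Equiv.subLeft a)).bijective.comp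
    (Involutive.bijective Complex.conj_conj)

theorem HahnSeries.order_eq_of_forall_lt_coeff_eq_zero {Γ R : Type*} [LinearOrder Γ] [Zero Γ]
    [Zero R] {x : HahnSeries Γ R} {a : Γ} (h : ∀ k < a, x.coeff k = 0) (ha : x.coeff a ≠ 0) :
    x.order = a :=
  le_antisymm (order_le_of_coeff_ne_zero ha)
    ((le_order_iff_forall (ne_zero_of_coeff_ne_zero ha)).2 h)

section Inv

variable {Γ K : Type*} [AddCommGroup Γ] [LinearOrder Γ] [IsOrderedAddMonoid Γ] [Field K]

theorem HahnSeries.leadingCoeff_inv (x : HahnSeries Γ K) :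
    x⁻¹.leadingCoeff = x.leadingCoeff⁻¹ := by
  rcases eq_or_ne x 0 with rfl | hx
  · simp
  refine eq_inv_of_mul_eq_one_right ?_
  rw [← leadingCoeff_mul, mul_inv_cancel₀ hx, leadingCoeff_one]

theorem HahnSeries.order_inv (x : HahnSeries Γ K) : x⁻¹.order = -x.order := by
  rcases eq_or_ne x 0 with rfl | hx
  · simp
  have hlc : x.leadingCoeff * x⁻¹.leadingCoeff ≠ 0 := by
    simpa [leadingCoeff_inv] using hx
  refine eq_neg_of_add_eq_zero_right ?_
  rw [← order_mul_of_ne_zero hlc, mul_inv_cancel₀ hx, order_one]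

end Inv

noncomputable def rsDet (ζ : ℕ → ℂ) (m : ℕ) : ℝ :=
  ∏ s ∈ Finset.Icc 1 m, (1 + Complex.normSq (ζ s))

noncomputable def rsRatio (ζ : ℕ → ℂ) (m : ℕ) : LaurentSeries ℂ :=
  rsP ζ m 1 0 * (rsP ζ m 1 1)⁻¹

section TruncatedProduct

variable (ζ : ℕ → ℂ) (m : ℕ)

lemma rsDet_pos : 0 < rsDet ζ m :=
  Finset.prod_pos fun _ _ => add_pos_of_pos_of_nonneg one_pos (Complex.normSq_nonneg _)

lemma rsP_succ_zero_one : rsP ζ (m + 1) 0 1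
    = rsP ζ m 0 1 + single (-((m : ℤ) + 1)) (ζ (m + 1)) * rsP ζ m 1 1 := by
  simp [rsP, rsM, Matrix.mul_apply, Fin.sum_univ_two]

lemma rsP_succ_one_zero : rsP ζ (m + 1) 1 0
    = rsP ζ m 1 0 + single ((m : ℤ) + 1) (-(starRingEnd ℂ) (ζ (m + 1))) * rsP ζ m 0 0 := by
  simp [rsP, rsM, Matrix.mul_apply, Fin.sum_univ_two, add_comm]

lemma rsP_succ_one_one : rsP ζ (m + 1) 1 1
    = rsP ζ m 1 1 + single ((m : ℤ) + 1) (-(starRingEnd ℂ) (ζ (m + 1))) * rsP ζ m 0 1 := by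
  simp [rsP, rsM, Matrix.mul_apply, Fin.sum_univ_two, add_comm]

lemma det_rsM (n : ℕ) : (rsM ζ n).det = single 0 ((1 + Complex.normSq (ζ n) : ℝ) : ℂ) := by
  rw [rsM, Matrix.det_fin_two_of, single_mul_single, neg_add_cancel, one_mul, ← single_zero_one,
    ← single_sub, mul_neg, sub_neg_eq_add, Complex.mul_conj]
  push_cast
  rfl

lemma det_rsP : (rsP ζ m).det = single 0 (rsDet ζ m : ℂ) := by
  induction m with
  | zero => simp [rsP, rsDet, single_zero_one]
  | succ m ih =>
    rw [rsP, Matrix.det_mul, ih, det_rsM, single_mul_single, add_zero]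
    unfold rsDet
    rw [Finset.prod_Icc_succ_top (Nat.le_add_left 1 m), mul_comm]
    push_cast
    rfl

lemma coeff_rsP_right_column :
    (∀ k < -(m : ℤ), (rsP ζ m 0 1).coeff k = 0) ∧
    (∀ k < 0, (rsP ζ m 1 1).coeff k = 0) ∧ (rsP ζ m 1 1).coeff 0 = 1 := by
  induction m with
  | zero =>
    exact ⟨fun k _ => by simp [rsP], fun k hk => by simp [rsP, coeff_one, hk.ne], by simp [rsP]⟩
  | succ m ih =>
    obtain ⟨hβ, hδ, hδ0⟩ := ih
    simp only [rsP_succ_zero_one, rsP_succ_one_one, coeff_add, coeff_single_mul]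
    refine ⟨fun k hk => ?_, fun k hk => ?_, ?_⟩
    · rw [hβ k (by omega), hδ _ (by omega), mul_zero, add_zero]
    · rw [hδ k hk, hβ _ (by omega), mul_zero, add_zero]
    · rw [hδ0, hβ _ (by omega), mul_zero, add_zero]

lemma order_rsP_one_one : (rsP ζ m 1 1).order = 0 :=
  order_eq_of_forall_lt_coeff_eq_zero (coeff_rsP_right_column ζ m).2.1
    (by simp [(coeff_rsP_right_column ζ m).2.2])

lemma leadingCoeff_rsP_one_one : (rsP ζ m 1 1).leadingCoeff = 1 := by
  rw [leadingCoeff_eq, order_rsP_one_one, (coeff_rsP_right_column ζ m).2.2]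

lemma rsP_one_one_ne_zero : rsP ζ m 1 1 ≠ 0 :=
  leadingCoeff_ne_zero.1 (by simp [leadingCoeff_rsP_one_one])

lemma rsRatio_succ_sub : rsRatio ζ (m + 1) - rsRatio ζ m
    = single ((m : ℤ) + 1) (-(starRingEnd ℂ) (ζ (m + 1)) * rsDet ζ m)
      * (rsP ζ (m + 1) 1 1 * rsP ζ m 1 1)⁻¹ := by
  have hδ := rsP_one_one_ne_zero ζ m
  have hδ' := rsP_one_one_ne_zero ζ (m + 1)
  have hcross : rsP ζ (m + 1) 1 0 * rsP ζ m 1 1 - rsP ζ m 1 0 * rsP ζ (m + 1) 1 1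
      = single ((m : ℤ) + 1) (-(starRingEnd ℂ) (ζ (m + 1))) * (rsP ζ m).det := by
    rw [rsP_succ_one_zero, rsP_succ_one_one, Matrix.det_fin_two]
    ring
  rw [det_rsP, single_mul_single, add_zero] at hcross
  rw [← hcross, rsRatio, rsRatio]
  field_simp

lemma order_and_leadingCoeff_inv_rsP_one_one_mul :
    (rsP ζ (m + 1) 1 1 * rsP ζ m 1 1)⁻¹.order = 0 ∧
      (rsP ζ (m + 1) 1 1 * rsP ζ m 1 1)⁻¹.leadingCoeff = 1 := by
  have hlc : (rsP ζ (m + 1) 1 1).leadingCoeff * (rsP ζ m 1 1).leadingCoeff = 1 := by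
    rw [leadingCoeff_rsP_one_one, leadingCoeff_rsP_one_one, one_mul]
  rw [order_inv, leadingCoeff_inv, order_mul_of_ne_zero (hlc ▸ one_ne_zero), leadingCoeff_mul,
    hlc, order_rsP_one_one, order_rsP_one_one]
  simp

lemma coeff_rsRatio_succ_of_le {k : ℤ} (hk : k ≤ m) :
    (rsRatio ζ (m + 1)).coeff k = (rsRatio ζ m).coeff k := by
  rw [← sub_eq_zero, ← coeff_sub, rsRatio_succ_sub, coeff_single_mul,
    coeff_eq_zero_of_lt_order (by rw [(order_and_leadingCoeff_inv_rsP_one_one_mul ζ m).1]; omega),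
    mul_zero]

lemma coeff_rsRatio_succ_self :
    (rsRatio ζ (m + 1)).coeff ((m : ℤ) + 1)
      = (rsRatio ζ m).coeff ((m : ℤ) + 1) - (starRingEnd ℂ) (ζ (m + 1)) * rsDet ζ m := by
  obtain ⟨hord, hlc⟩ := order_and_leadingCoeff_inv_rsP_one_one_mul ζ m
  have hdiff := congrArg (coeff · ((m : ℤ) + 1)) (rsRatio_succ_sub ζ m)
  simp only [coeff_sub, coeff_single_mul, sub_self] at hdiff
  rw [← hord, ← leadingCoeff_eq, hlc] at hdiff
  linear_combination hdiff

lemma coeff_rsRatio_of_le {k : ℤ} {n : ℕ} (hk : k ≤ n) (hnm : n ≤ m) :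
    (rsRatio ζ m).coeff k = (rsRatio ζ n).coeff k := by
  induction m, hnm using Nat.le_induction with
  | base => rfl
  | succ m hnm ih => rw [coeff_rsRatio_succ_of_le ζ m (by omega), ih]

end TruncatedProduct

lemma rsP_congr {ζ ζ' : ℕ → ℂ} {m : ℕ} (h : ∀ s ≤ m, ζ s = ζ' s) : rsP ζ m = rsP ζ' m := by
  induction m with
  | zero => rfl
  | succ m ih => rw [rsP, rsP, ih fun s hs => h s (by omega), rsM, rsM, h (m + 1) le_rfl]

lemma rsRatio_congr {ζ ζ' : ℕ → ℂ} {m : ℕ} (h : ∀ s ≤ m, ζ s = ζ' s) :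
    rsRatio ζ m = rsRatio ζ' m := by
  rw [rsRatio, rsRatio, rsP_congr h]

lemma rsDet_congr {ζ ζ' : ℕ → ℂ} {m : ℕ} (h : ∀ s ≤ m, ζ s = ζ' s) : rsDet ζ m = rsDet ζ' m :=
  Finset.prod_congr rfl fun s hs => by rw [h s (Finset.mem_Icc.1 hs).2]

lemma rsExt_succ {N : ℕ} (ζ : Fin N → ℂ) (n : Fin N) : rsExt N ζ ((n : ℕ) + 1) = ζ n := by
  rw [rsExt, dif_pos ⟨by omega, n.isLt⟩]
  rfl

lemma rsExt_congr {N k : ℕ} {ζ ζ' : Fin N → ℂ} (h : ∀ m : Fin N, (m : ℕ) < k → ζ m = ζ' m) :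
    ∀ s ≤ k, rsExt N ζ s = rsExt N ζ' s := by
  intro s hs
  unfold rsExt
  split_ifs with hs'
  · exact h _ (by simp only; omega)
  · rfl

lemma coeff_rsRatio_rsExt {N : ℕ} (ζ : Fin N → ℂ) (n : Fin N) :
    (rsRatio (rsExt N ζ) N).coeff ((n : ℕ) + 1 : ℤ)
      = (rsRatio (rsExt N ζ) n).coeff ((n : ℕ) + 1 : ℤ)
        - (starRingEnd ℂ) (ζ n) * rsDet (rsExt N ζ) n := by
  rw [coeff_rsRatio_of_le _ _ (n := (n : ℕ) + 1) (by push_cast; rfl) n.isLt,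
    coeff_rsRatio_succ_self, rsExt_succ]

/-- The map `(ζ₁,…,ζ_N) ↦ (ξ₁,…,ξ_N)`, where `ξ_n` is the `n`-th Taylor coefficient
of the quotient `γ₂/δ₂` of the `(2,1)` and `(2,2)` entries of the truncated product
at level `N`, is a bijection from `ℂ^N` to `ℂ^N`. -/
theorem xi_map_bijective (N : ℕ) :
    Function.Bijective (fun ζ : Fin N → ℂ => fun n : Fin N =>
      ((rsP (rsExt N ζ) N) 1 0 * ((rsP (rsExt N ζ) N) 1 1)⁻¹).coeff ((n : ℕ) + 1 : ℤ)) := by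
  change Bijective fun ζ : Fin N → ℂ => fun n : Fin N =>
    (rsRatio (rsExt N ζ) N).coeff ((n : ℕ) + 1 : ℤ)
  refine bijective_of_triangular (fun ζ ζ' n h => ?_) (fun ζ n => ?_)
  · have hext := rsExt_congr (k := n) fun m hm => h m hm.le
    simp only [coeff_rsRatio_rsExt, rsRatio_congr hext, rsDet_congr hext, h n le_rfl]
  · have hext (w : ℂ) := rsExt_congr (k := n) (ζ := update ζ n w) (ζ' := ζ)
      fun m hm => update_of_ne (Fin.ne_of_lt hm) w ζ
    simp only [coeff_rsRatio_rsExt, rsRatio_congr (hext _), rsDet_congr (hext _), update_self]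
    exact Complex.bijective_sub_conj_mul _ (Complex.ofReal_ne_zero.2 (rsDet_pos _ _).ne')
end
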